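/- Let 1 → N → G →^ψ G̃ → 1 be a central extension of groups, let n ≥ 3, and let ρ : B_n → G be a homomorphism from the braid group. Then the image of ρ is cyclic if and only if the image of ψ∘ρ is cyclic. -/

import Mathlib

/-!
Cyclicity passes to quotients, so only the converse needs an argument. If the image of `ψ ∘ ρ`
is cyclic it is abelian, so the commutator of the images of two adjacent generators `σᵢ, σᵢ₊₁`
lies in `ker ψ`, hence is central. Writing `ab = z ba` with `z` central, the braid relation
`aba = bab` becomes `z baa = z bba`, so `a = b`. Thus all generators have the same image under
`ρ`, and the image of `ρ` is generated by that single element.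
-/

/-- The braid relations on `m` generators. -/
def braidRels (m : ℕ) : Set (FreeGroup (Fin m)) :=
  {r | ∃ i j : Fin m, (i : ℕ) + 2 ≤ (j : ℕ) ∧
      r = FreeGroup.of i * FreeGroup.of j * (FreeGroup.of i)⁻¹ * (FreeGroup.of j)⁻¹} ∪
  {r | ∃ i j : Fin m, (i : ℕ) + 1 = (j : ℕ) ∧
      r = FreeGroup.of i * FreeGroup.of j * FreeGroup.of i *
        (FreeGroup.of j * FreeGroup.of i * FreeGroup.of j)⁻¹}

/-- The braid group on `n` strands, with `n - 1` standard generators. -/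
abbrev BraidGroup (n : ℕ) := PresentedGroup (braidRels (n - 1))

/-- The standard generator `σ_{i+1}` of the braid group (0-indexed: `braidGen i = σ_{i+1}`). -/
def braidGen {n : ℕ} (i : Fin (n - 1)) : BraidGroup n := PresentedGroup.of i

open scoped commutatorElement

lemma eq_of_braid_rel_of_commutatorElement_mem_center {G : Type*} [Group G] {a b : G}
    (hc : ⁅a, b⁆ ∈ Subgroup.center G) (hab : a * b * a = b * a * b) : a = b := by
  set z := ⁅a, b⁆
  have hz : a * b = z * (b * a) := by simp only [z, commutatorElement_def]; group
  have hzb : z * b = b * z := (Subgroup.mem_center_iff.mp hc b).symm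
  have : z * (b * a * a) = z * (b * b * a) :=
    calc z * (b * a * a) = a * b * a := by rw [hz]; group
      _ = b * (a * b) := by rw [hab]; group
      _ = (z * b) * (b * a) := by rw [hz, hzb]; group
      _ = z * (b * b * a) := by group
  simpa using this

lemma commutatorElement_mem_center_of_commute {G G' : Type*} [Group G] [Group G'] {ψ : G →* G'}
    (hcentral : ψ.ker ≤ Subgroup.center G) {a b : G} (hab : Commute (ψ a) (ψ b)) :
    ⁅a, b⁆ ∈ Subgroup.center G :=
  hcentral <| by
    rwa [MonoidHom.mem_ker, map_commutatorElement, commutatorElement_eq_one_iff_commute]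

lemma Fin.apply_eq_apply_of_succ {X : Type*} {m : ℕ} {f : Fin m → X}
    (hf : ∀ i j : Fin m, (i : ℕ) + 1 = j → f i = f j) (i j : Fin m) : f i = f j := by
  have h0 : 0 < m := i.pos
  suffices h : ∀ (k : ℕ) (hk : k < m), f ⟨k, hk⟩ = f ⟨0, h0⟩ from
    (h i i.2).trans (h j j.2).symm
  intro k
  induction k with
  | zero => exact fun _ => rfl
  | succ k ih => exact fun hk => (hf ⟨k, by omega⟩ ⟨k + 1, hk⟩ rfl).symm.trans (ih (by omega))

lemma PresentedGroup.isCyclic_range_of_forall_map_of_eq {α G : Type*} [Group G]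
    {rels : Set (FreeGroup α)} (ρ : PresentedGroup rels →* G)
    (h : ∀ a b : α, ρ (of a) = ρ (of b)) : IsCyclic ρ.range := by
  obtain ⟨g, hg⟩ : ∃ g, ∀ a, ρ (of a) = g := by
    rcases isEmpty_or_nonempty α with hα | ⟨⟨a⟩⟩
    · exact ⟨1, hα.elim⟩
    · exact ⟨ρ (of a), fun b => h b a⟩
  refine Subgroup.isCyclic_of_le (H' := Subgroup.zpowers g) ?_
  rintro _ ⟨x, rfl⟩
  exact generated_by rels ((Subgroup.zpowers g).comap ρ)
    (fun a => by simp [Subgroup.mem_comap, hg a]) x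

lemma braidGen_mul_braidGen_mul_braidGen {n : ℕ} {i j : Fin (n - 1)} (hij : (i : ℕ) + 1 = j) :
    braidGen (n := n) i * braidGen j * braidGen i = braidGen j * braidGen i * braidGen j := by
  have h := PresentedGroup.mk_eq_mk_of_mul_inv_mem (rels := braidRels (n - 1))
    (Or.inr ⟨i, j, hij, rfl⟩)
  simp only [map_mul] at h
  exact h

theorem stmt_6_general (n : ℕ) {G G' : Type*} [Group G] [Group G']
    (ψ : G →* G') (hcentral : ψ.ker ≤ Subgroup.center G)
    (ρ : BraidGroup n →* G) :
    IsCyclic ρ.range ↔ IsCyclic (ψ.comp ρ).range := by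
  refine ⟨fun _ => ?_, fun h => ?_⟩
  · rw [MonoidHom.range_comp]
    exact isCyclic_of_surjective _ (ψ.subgroupMap_surjective ρ.range)
  have hcomm : ∀ x y, Commute (ψ (ρ x)) (ψ (ρ y)) := fun x y =>
    congrArg Subtype.val
      ((IsCyclic.commGroup (α := (ψ.comp ρ).range)).mul_comm ⟨_, x, rfl⟩ ⟨_, y, rfl⟩)
  refine PresentedGroup.isCyclic_range_of_forall_map_of_eq ρ <|
    Fin.apply_eq_apply_of_succ fun i j hij => ?_
  have hbraid : ρ (braidGen i) * ρ (braidGen j) * ρ (braidGen i) =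
      ρ (braidGen j) * ρ (braidGen i) * ρ (braidGen j) := by
    simpa only [map_mul] using congrArg ρ (braidGen_mul_braidGen_mul_braidGen hij)
  exact eq_of_braid_rel_of_commutatorElement_mem_center
    (commutatorElement_mem_center_of_commute hcentral (hcomm (braidGen i) (braidGen j))) hbraid

theorem stmt_6 (n : ℕ) (hn : 3 ≤ n) {G G' : Type*} [Group G] [Group G']
    (ψ : G →* G') (hsurj : Function.Surjective ψ) (hcentral : ψ.ker ≤ Subgroup.center G)
    (ρ : BraidGroup n →* G) :
    IsCyclic ρ.range ↔ IsCyclic (ψ.comp ρ).range :=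
  stmt_6_general n ψ hcentral ρ
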